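/- Let Y ⊆ Σ^ℤ be a subshift with a one-block topological conjugacy φ onto X̃ ⊆ Σ̃^ℤ given by a one-block map Φ : Σ → Σ̃ with Φ⁻¹(Σ̃_synchro(X̃)) ⊆ Σ_synchro(Y), where X̃ is strongly synchronizing and φ⁻¹ has coding window [-L, L]. Then Y is strongly synchronizing, with constant Q = L + Q̃ where Q̃ is a strong synchronization constant for X̃. -/

import Mathlib

/-- The shift on `Σ^ℤ`: `(x_i)_{i∈ℤ} ↦ (x_{i+1})_{i∈ℤ}`. -/
def shift {A : Type*} (x : ℤ → A) : ℤ → A := fun i => x (i + 1)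

/-- The word `x_{[a,b]}` carried by the block of `x` on the interval `[a, b]`. -/
def block {A : Type*} (x : ℤ → A) (a b : ℤ) : List A :=
  (List.range (b + 1 - a).toNat).map fun k => x (a + k)

/-- A word is admissible for `X` if it appears in a point of `X`. -/
def Admissible {A : Type*} (X : Set (ℤ → A)) (w : List A) : Prop :=
  ∃ x ∈ X, ∃ n : ℤ, ∀ (k : ℕ) (h : k < w.length), x (n + k) = w.get ⟨k, h⟩

/-- A word `v` is synchronizing for `X` if it is admissible and whenever `uv` and `vw`
are admissible, so is `uvw`. -/
def IsSyncWord {A : Type*} (X : Set (ℤ → A)) (v : List A) : Prop :=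
  Admissible X v ∧ ∀ u w : List A, Admissible X (u ++ v) → Admissible X (v ++ w) →
    Admissible X (u ++ v ++ w)

/-- A subshift: a nonempty, closed, shift-invariant subset of `Σ^ℤ`. -/
def IsSubshift {A : Type*} [TopologicalSpace A] (X : Set (ℤ → A)) : Prop :=
  X.Nonempty ∧ IsClosed X ∧ shift '' X = X

/-- Topological transitivity of a subshift, expressed on its language: any two admissible
words can be joined by an admissible transition word. -/
def LangTransitive {A : Type*} (X : Set (ℤ → A)) : Prop :=
  ∀ u v : List A, Admissible X u → Admissible X v → ∃ w, Admissible X (u ++ w ++ v)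

/-- A synchronizing subshift: topologically transitive with a synchronizing word. -/
def SyncSubshift {A : Type*} (X : Set (ℤ → A)) : Prop :=
  LangTransitive X ∧ ∃ v : List A, IsSyncWord X v

/-- A strongly synchronizing subshift: synchronizing symbols appear uniformly close
(within distance `Q`) to synchronizing words. -/
def StronglySync {A : Type*} (X : Set (ℤ → A)) : Prop :=
  SyncSubshift X ∧ ∃ Q : ℕ, ∀ x ∈ X, ∀ I₁ I₂ : ℤ, I₁ ≤ I₂ →
    IsSyncWord X (block x I₁ I₂) →
    ∃ i : ℤ, I₁ - Q ≤ i ∧ i ≤ I₂ + Q ∧ IsSyncWord X [x i]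

/-- The higher block system `X^{⟨[a,b]⟩}` of `X`, over the alphabet of words. -/
def higherBlock {A : Type*} (X : Set (ℤ → A)) (a b : ℤ) : Set (ℤ → List A) :=
  { y | ∃ x ∈ X, ∀ i : ℤ, y i = block x (i + a) (i + b) }

/-- `X` is strongly synchronizing with constant `Q`. -/
def StrongSyncConst {A : Type*} (X : Set (ℤ → A)) (Q : ℤ) : Prop :=
  ∀ x ∈ X, ∀ I₁ I₂ : ℤ, I₁ ≤ I₂ → IsSyncWord X (block x I₁ I₂) →
    ∃ i : ℤ, I₁ - Q ≤ i ∧ i ≤ I₂ + Q ∧ IsSyncWord X [x i]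


/-!
A synchronizing word `x_{[I₁, I₂]}` of `Y` is carried to a synchronizing word
`Φ(x)_{[I₁ - L, I₂ + L]}` of `X̃`: admissible extensions of the image on either side are pulled
back through the coding window of `φ⁻¹`, which reproduces `x_{[I₁, I₂]}` between them; the two
pulled-back contexts are glued in `Y` because `x_{[I₁, I₂]}` is synchronizing, and the glued point
is pushed forward again. Strong synchronization of `X̃` then yields a synchronizing symbol
`Φ(x_i)` with `i` within `L + Q̃` of `[I₁, I₂]`, so `x_i` is synchronizing. Transitivity of `Y` and
a synchronizing word of `Y` are pulled back from `X̃` through the window in the same way.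
-/

open Set

section Words

variable {A : Type*} {X : Set (ℤ → A)} {x y : ℤ → A} {n a b : ℤ} {u v w : List A}

def OccursAt (x : ℤ → A) (n : ℤ) (w : List A) : Prop :=
  ∀ (k : ℕ) (h : k < w.length), x (n + k) = w[k]

theorem admissible_iff : Admissible X w ↔ ∃ x ∈ X, ∃ n, OccursAt x n w := Iff.rfl

theorem occursAt_append :
    OccursAt x n (u ++ v) ↔ OccursAt x n u ∧ OccursAt x (n + u.length) v := by
  constructor
  · intro h
    refine ⟨fun k hk => ?_, fun k hk => ?_⟩
    · have := h k (by simp; omega)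
      rwa [List.getElem_append_left hk] at this
    · have := h (u.length + k) (by simp; omega)
      rw [List.getElem_append_right (by omega)] at this
      simpa [add_assoc] using this
  · rintro ⟨hu, hv⟩ k hk
    by_cases hku : k < u.length
    · rw [List.getElem_append_left hku]; exact hu k hku
    · rw [List.getElem_append_right (by omega)]
      have := hv (k - u.length) (by simp at hk; omega)
      rw [← this]; congr 1; omega

theorem OccursAt.congr (h : OccursAt x n w) (hxy : EqOn x y (Ico n (n + w.length))) :
    OccursAt y n w := fun k hk =>
  (hxy ⟨by omega, by omega⟩).symm.trans (h k hk)

theorem occursAt_comp_add {t : ℤ} :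
    OccursAt (fun j => x (j + t)) n w ↔ OccursAt x (n + t) w := by
  simp only [OccursAt, add_right_comm n t]

theorem block_eq_map (x : ℤ → A) (a b : ℤ) :
    block x a b = (List.range (b + 1 - a).toNat).map fun k : ℕ => x (a + k) :=
  (congrArg _ (List.flatMap_pure_eq_map _ _)).trans (List.map_map ..)

theorem length_block (x : ℤ → A) (a b : ℤ) : (block x a b).length = (b + 1 - a).toNat := by
  simp [block_eq_map]

theorem getElem_block (x : ℤ → A) (a b : ℤ) (k : ℕ) (hk : k < (block x a b).length) :
    (block x a b)[k] = x (a + k) := by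
  simp [block_eq_map]

theorem occursAt_block_iff :
    OccursAt y n (block x a b) ↔ EqOn y (fun j => x (j + (a - n))) (Icc n (n + (b - a))) := by
  constructor
  · intro h j ⟨hj₁, hj₂⟩
    have := h (j - n).toNat (by rw [length_block]; omega)
    rw [getElem_block, Int.toNat_of_nonneg (by omega), add_sub_cancel] at this
    rw [this]; ring_nf
  · intro h k hk
    rw [length_block] at hk
    rw [getElem_block, h ⟨by omega, by omega⟩]; ring_nf

theorem occursAt_block_self_iff : OccursAt y a (block x a b) ↔ EqOn y x (Icc a b) := by
  simp [occursAt_block_iff]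

theorem occursAt_block (x : ℤ → A) (a b : ℤ) : OccursAt x a (block x a b) :=
  occursAt_block_self_iff.2 (eqOn_refl _ _)

theorem OccursAt.block_eq (h : OccursAt x n w) : block x n (n + w.length - 1) = w :=
  List.ext_getElem (by rw [length_block]; omega) fun k _ hk => by
    rw [getElem_block, h k hk]

theorem occursAt_glue {f g y₁ y₂ : ℤ → A} {a b L : ℤ} (hL : 0 ≤ L) (hab : a ≤ b)
    (hu : OccursAt y₁ (a - L - u.length) u) (hw : OccursAt y₂ (b + L + 1) w)
    (hy₁ : EqOn y₁ g (Icc (a - L) (b + L))) (hy₂ : EqOn y₂ g (Icc (a - L) (b + L)))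
    (hf₁ : EqOn f y₁ (Icc (a - L - u.length) (a - 1))) (hfg : EqOn f g (Icc a b))
    (hf₂ : EqOn f y₂ (Icc (b + 1) (b + L + w.length))) :
    OccursAt f (a - L - u.length) (u ++ block g (a - L) (b + L) ++ w) := by
  refine occursAt_append.2 ⟨occursAt_append.2 ⟨?_, ?_⟩, ?_⟩
  · exact hu.congr fun j ⟨hj₁, hj₂⟩ => (hf₁ ⟨hj₁, by omega⟩).symm
  · rw [sub_add_cancel, occursAt_block_self_iff]
    intro j ⟨hj₁, hj₂⟩
    rcases lt_or_ge j a with hja | hja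
    · exact (hf₁ ⟨by omega, by omega⟩).trans (hy₁ ⟨hj₁, hj₂⟩)
    rcases le_or_gt j b with hjb | hjb
    · exact hfg ⟨hja, hjb⟩
    · exact (hf₂ ⟨by omega, by omega⟩).trans (hy₂ ⟨hj₁, hj₂⟩)
  · rw [List.length_append, length_block, Nat.cast_add,
      show a - L - u.length + (u.length + (b + L + 1 - (a - L)).toNat) = b + L + 1 by omega]
    exact hw.congr fun j ⟨hj₁, hj₂⟩ => (hf₂ ⟨by omega, by omega⟩).symm

theorem admissible_block (hx : x ∈ X) (a b : ℤ) : Admissible X (block x a b) :=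
  ⟨x, hx, a, occursAt_block x a b⟩

theorem Admissible.of_append_left (h : Admissible X (u ++ v)) : Admissible X u := by
  obtain ⟨x, hx, n, hn⟩ := h
  exact ⟨x, hx, n, (occursAt_append.1 hn).1⟩

theorem comp_add_mem (hX : shift '' X = X) (hx : x ∈ X) (t : ℤ) :
    (fun j => x (j + t)) ∈ X := by
  induction t using Int.induction_on with
  | zero => simpa using hx
  | succ k ih =>
    rw [← hX]
    exact ⟨_, ih, funext fun j => by simp only [shift]; ring_nf⟩
  | pred k ih =>
    rw [← hX] at ih
    obtain ⟨z, hz, hzx⟩ := ih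
    convert hz using 1
    funext j
    have := congrFun hzx (j - 1)
    simp only [shift, sub_add_cancel] at this
    rw [this]; ring_nf

theorem Admissible.exists_occursAt (hX : shift '' X = X) (h : Admissible X w) (n : ℤ) :
    ∃ x ∈ X, OccursAt x n w := by
  obtain ⟨x, hx, m, hm⟩ := h
  refine ⟨_, comp_add_mem hX hx (m - n), occursAt_comp_add.2 ?_⟩
  rwa [add_sub_cancel]

theorem IsSyncWord.append_right (hv : IsSyncWord X v) (h : Admissible X (v ++ w)) :
    IsSyncWord X (v ++ w) := by
  refine ⟨h, fun u w' hu hw' => ?_⟩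
  have := hv.2 u (w ++ w') (Admissible.of_append_left (v := w) (by simpa using hu))
    (by simpa using hw')
  simpa using this

theorem StrongSyncConst.exists_isSyncWord_singleton {Q : ℤ} (hX : shift '' X = X)
    (hQ : StrongSyncConst X Q) (hv : IsSyncWord X v) : ∃ x ∈ X, ∃ i, IsSyncWord X [x i] := by
  obtain ⟨x, hx, hocc⟩ := hv.1.exists_occursAt hX 0
  have hocc' : OccursAt x 0 (v ++ [x v.length]) :=
    occursAt_append.2 ⟨hocc, fun k hk => by simp at hk; subst hk; simp⟩
  have hsync := hv.append_right ⟨x, hx, 0, hocc'⟩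
  rw [← hocc'.block_eq] at hsync
  obtain ⟨i, -, -, hi⟩ := hQ x hx 0 _ (by simp) hsync
  exact ⟨x, hx, i, hi⟩

end Words

section CodingWindow

variable {A B : Type*} {Y : Set (ℤ → A)} {Xt : Set (ℤ → B)} {Φ : A → B}
  {G : (ℤ → B) → ℤ → A} {L : ℤ}

def IsCodingWindow (G : (ℤ → B) → ℤ → A) (Xt : Set (ℤ → B)) (L : ℤ) : Prop :=
  ∀ y ∈ Xt, ∀ y' ∈ Xt, ∀ i : ℤ, (∀ j : ℤ, i - L ≤ j → j ≤ i + L → y j = y' j) → G y i = G y' i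

theorem occursAt_block_of_isCodingWindow (hY : shift '' Y = Y)
    (hF : ∀ x ∈ Y, (fun i => Φ (x i)) ∈ Xt) (hGF : ∀ x ∈ Y, G (fun i => Φ (x i)) = x)
    (hwin : IsCodingWindow G Xt L) {x : ℤ → A} (hx : x ∈ Y) {y : ℤ → B} (hy : y ∈ Xt)
    {n a b : ℤ} (h : OccursAt y (n - L) (block (fun i => Φ (x i)) (a - L) (b + L))) :
    OccursAt (G y) n (block x a b) := by
  rw [occursAt_block_iff] at h ⊢
  intro i ⟨hi₁, hi₂⟩
  have hx' : (fun j => x (j + (a - n))) ∈ Y := comp_add_mem hY hx _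
  rw [← hGF _ hx']
  refine hwin y hy _ (hF _ hx') i fun j hj₁ hj₂ => ?_
  rw [h ⟨by omega, by omega⟩]
  ring_nf

theorem langTransitive_of_isCodingWindow (hY : shift '' Y = Y) (hXt : shift '' Xt = Xt)
    (hF : ∀ x ∈ Y, (fun i => Φ (x i)) ∈ Xt) (hG : ∀ y ∈ Xt, G y ∈ Y)
    (hGF : ∀ x ∈ Y, G (fun i => Φ (x i)) = x) (hwin : IsCodingWindow G Xt L) (hL : 0 ≤ L)
    (htrans : LangTransitive Xt) : LangTransitive Y := by
  intro u v hu hv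
  obtain ⟨xu, hxu, hu₀⟩ := hu.exists_occursAt hY 0
  obtain ⟨xv, hxv, hv₀⟩ := hv.exists_occursAt hY 0
  set U := block (fun i => Φ (xu i)) (0 - L) (0 + u.length - 1 + L)
  set V := block (fun i => Φ (xv i)) (0 - L) (0 + v.length - 1 + L)
  obtain ⟨t, ht⟩ := htrans U V (admissible_block (hF _ hxu) _ _) (admissible_block (hF _ hxv) _ _)
  obtain ⟨y, hy, hocc⟩ := ht.exists_occursAt hXt (0 - L)
  obtain ⟨⟨hU, -⟩, hV⟩ := occursAt_append.1 hocc |>.imp_left occursAt_append.1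
  set m : ℤ := U.length + t.length
  have hUlen : (U.length : ℤ) = u.length + 2 * L := by rw [length_block]; omega
  have hu' : OccursAt (G y) 0 u := by
    simpa only [hu₀.block_eq] using occursAt_block_of_isCodingWindow hY hF hGF hwin hxu hy hU
  have hv' : OccursAt (G y) m v := by
    rw [← hv₀.block_eq]
    refine occursAt_block_of_isCodingWindow hY hF hGF hwin hxv hy ?_
    convert hV using 2
    simp only [List.length_append, Nat.cast_add, m]; ring
  refine ⟨block (G y) u.length (m - 1), G y, hG y hy, 0, ?_⟩
  refine occursAt_append.2 ⟨occursAt_append.2 ⟨hu', by simpa using occursAt_block _ _ _⟩, ?_⟩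
  convert hv' using 1
  simp only [List.length_append, length_block]; omega

theorem isSyncWord_block_map_of_isCodingWindow (hY : shift '' Y = Y) (hXt : shift '' Xt = Xt)
    (hF : ∀ x ∈ Y, (fun i => Φ (x i)) ∈ Xt) (hG : ∀ y ∈ Xt, G y ∈ Y)
    (hGF : ∀ x ∈ Y, G (fun i => Φ (x i)) = x) (hFG : ∀ y ∈ Xt, (fun i => Φ (G y i)) = y)
    (hwin : IsCodingWindow G Xt L) (hL : 0 ≤ L) {x : ℤ → A} (hx : x ∈ Y) {a b : ℤ}
    (hab : a ≤ b) (hv : IsSyncWord Y (block x a b)) :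
    IsSyncWord Xt (block (fun i => Φ (x i)) (a - L) (b + L)) := by
  set W := block (fun i => Φ (x i)) (a - L) (b + L)
  refine ⟨admissible_block (hF x hx) _ _, fun u w hu hw => ?_⟩
  set s := a - L - u.length
  obtain ⟨y₁, hy₁, hu₁, hW₁⟩ : ∃ y ∈ Xt, OccursAt y s u ∧ OccursAt y (a - L) W := by
    obtain ⟨y, hy, h⟩ := hu.exists_occursAt hXt s
    exact ⟨y, hy, occursAt_append.1 h |>.imp_right (by simpa [s] using ·)⟩
  obtain ⟨y₂, hy₂, hW₂, hw₂⟩ : ∃ y ∈ Xt, OccursAt y (a - L) W ∧ OccursAt y (b + L + 1) w := by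
    obtain ⟨y, hy, h⟩ := hw.exists_occursAt hXt (a - L)
    refine ⟨y, hy, occursAt_append.1 h |>.imp_right fun hw => ?_⟩
    convert hw using 1
    simp only [W, length_block]; omega
  set c := b + L + w.length
  have hp : Admissible Y (block (G y₁) s (a - 1) ++ block x a b) := by
    refine ⟨G y₁, hG _ hy₁, s, occursAt_append.2 ⟨occursAt_block _ _ _, ?_⟩⟩
    convert occursAt_block_of_isCodingWindow hY hF hGF hwin hx hy₁ hW₁ using 1
    rw [length_block]; omega
  have hq : Admissible Y (block x a b ++ block (G y₂) (b + 1) c) := by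
    refine ⟨G y₂, hG _ hy₂, a, occursAt_append.2
      ⟨occursAt_block_of_isCodingWindow hY hF hGF hwin hx hy₂ hW₂, ?_⟩⟩
    convert occursAt_block (G y₂) (b + 1) c using 1
    rw [length_block]; omega
  obtain ⟨z, hz, hocc⟩ := (hv.2 _ _ hp hq).exists_occursAt hY s
  obtain ⟨⟨hz₁, hzx⟩, hz₂⟩ := occursAt_append.1 hocc |>.imp_left occursAt_append.1
  replace hzx : OccursAt z a (block x a b) := by
    convert hzx using 1; simp only [length_block]; omega
  replace hz₂ : OccursAt z (b + 1) (block (G y₂) (b + 1) c) := by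
    convert hz₂ using 1; simp only [List.length_append, length_block]; omega
  rw [occursAt_block_self_iff] at hz₁ hzx hz₂ hW₁ hW₂
  have hΦz₁ : EqOn (fun i => Φ (z i)) y₁ (Icc s (a - 1)) := fun j hj =>
    (congrArg Φ (hz₁ hj)).trans (congrFun (hFG y₁ hy₁) j)
  have hΦz₂ : EqOn (fun i => Φ (z i)) y₂ (Icc (b + 1) c) := fun j hj =>
    (congrArg Φ (hz₂ hj)).trans (congrFun (hFG y₂ hy₂) j)
  exact admissible_iff.2 ⟨_, hF z hz, s, occursAt_glue hL hab hu₁ hw₂ hW₁ hW₂ hΦz₁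
    (fun j hj => congrArg Φ (hzx hj)) hΦz₂⟩

end CodingWindow

theorem stmt17_general {A B : Type*}
    [TopologicalSpace A] [TopologicalSpace B]
    (Y : Set (ℤ → A)) (Xt : Set (ℤ → B)) (hY : IsSubshift Y) (hXt : IsSubshift Xt)
    (Φ : A → B) (G : (ℤ → B) → (ℤ → A))
    (hF : ∀ x ∈ Y, (fun i => Φ (x i)) ∈ Xt)
    (hG : ∀ y ∈ Xt, G y ∈ Y)
    (hGF : ∀ x ∈ Y, G (fun i => Φ (x i)) = x)
    (hFG : ∀ y ∈ Xt, (fun i => Φ (G y i)) = y)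
    (L : ℤ) (hL : 0 ≤ L)
    (hGwin : ∀ y ∈ Xt, ∀ y' ∈ Xt, ∀ i : ℤ,
      (∀ j : ℤ, i - L ≤ j → j ≤ i + L → y j = y' j) → G y i = G y' i)
    (hsub : ∀ a : A, IsSyncWord Xt [Φ a] → IsSyncWord Y [a])
    (hXtsync : SyncSubshift Xt) (Qt : ℤ)
    (hstrong : StrongSyncConst Xt Qt) :
    SyncSubshift Y ∧ StrongSyncConst Y (L + Qt) := by
  refine ⟨⟨langTransitive_of_isCodingWindow hY.2.2 hXt.2.2 hF hG hGF hGwin hL hXtsync.1, ?_⟩, ?_⟩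
  · obtain ⟨v, hv⟩ := hXtsync.2
    obtain ⟨y, hy, i, hi⟩ := hstrong.exists_isSyncWord_singleton hXt.2.2 hv
    exact ⟨[G y i], hsub _ (by rwa [congrFun (hFG y hy) i])⟩
  · intro x hx I₁ I₂ h12 hv
    obtain ⟨i, hi₁, hi₂, hi⟩ := hstrong _ (hF x hx) (I₁ - L) (I₂ + L) (by omega)
      (isSyncWord_block_map_of_isCodingWindow hY.2.2 hXt.2.2 hF hG hGF hFG hGwin hL hx h12 hv)
    exact ⟨i, by omega, by omega, hsub _ hi⟩

/-- If `φ : Y → X̃` is a one-block conjugacy given by `Φ : Σ → Σ̃` with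
`Φ⁻¹(Σ̃_synchro(X̃)) ⊆ Σ_synchro(Y)`, `φ⁻¹` has coding window `[-L, L]`, and `X̃` is
strongly synchronizing with constant `Q̃`, then `Y` is strongly synchronizing with
constant `L + Q̃`. -/
theorem stmt17 {A B : Type*} [Fintype A] [Fintype B]
    [TopologicalSpace A] [DiscreteTopology A] [TopologicalSpace B] [DiscreteTopology B]
    (Y : Set (ℤ → A)) (Xt : Set (ℤ → B)) (hY : IsSubshift Y) (hXt : IsSubshift Xt)
    (Φ : A → B) (G : (ℤ → B) → (ℤ → A))
    (hF : ∀ x ∈ Y, (fun i => Φ (x i)) ∈ Xt)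
    (hG : ∀ y ∈ Xt, G y ∈ Y)
    (hGF : ∀ x ∈ Y, G (fun i => Φ (x i)) = x)
    (hFG : ∀ y ∈ Xt, (fun i => Φ (G y i)) = y)
    (L : ℤ) (hL : 0 ≤ L)
    (hGwin : ∀ y ∈ Xt, ∀ y' ∈ Xt, ∀ i : ℤ,
      (∀ j : ℤ, i - L ≤ j → j ≤ i + L → y j = y' j) → G y i = G y' i)
    (hsub : ∀ a : A, IsSyncWord Xt [Φ a] → IsSyncWord Y [a])
    (hXtsync : SyncSubshift Xt) (Qt : ℤ) (hQt : 0 ≤ Qt)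
    (hstrong : StrongSyncConst Xt Qt) :
    SyncSubshift Y ∧ StrongSyncConst Y (L + Qt) :=
  stmt17_general Y Xt hY hXt Φ G hF hG hGF hFG L hL hGwin hsub hXtsync Qt hstrong
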